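/- arXiv:1305.6794 — 7 statements merged into one kernel-verified Lean document; each statement's English description precedes it below -/
import Mathlib

section
/- Let a ⊆ b and c ⊆ d be submodules of a module x (or subobjects in an abelian category). Then there is a short exact sequence 0 → (b ∩ d)/(a ∩ c) → b/a ⊕ d/c → (b + d)/(a + c) → 0. -/
variable {R M : Type*} [Ring R] [AddCommGroup M] [Module R M]

/-- The map `b/a → b'/a'` induced by the inclusions, for submodules `a ≤ b`, `a' ≤ b'`
of a fixed module with `b ≤ b'` and `a ≤ a'`. -/
noncomputable def qmap {a b a' b' : Submodule R M} (h1 : b ≤ b') (h2 : a ≤ a') :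
    (b ⧸ (a.comap b.subtype)) →ₗ[R] (b' ⧸ (a'.comap b'.subtype)) :=
  Submodule.mapQ _ _ (Submodule.inclusion h1)
    (fun x hx => by
      simp only [Submodule.mem_comap, Submodule.coe_subtype] at hx ⊢
      exact h2 hx)

lemma qmap_mk {a b a' b' : Submodule R M} (h1 : b ≤ b') (h2 : a ≤ a') (x : b) :
    qmap h1 h2 (Submodule.Quotient.mk x) = Submodule.Quotient.mk ⟨(x : M), h1 x.2⟩ := rfl

lemma qmk_eq_zero {a b : Submodule R M} (x : b) :
    (Submodule.Quotient.mk x : b ⧸ (a.comap b.subtype)) = 0 ↔ (x : M) ∈ a := by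
  rw [Submodule.Quotient.mk_eq_zero, Submodule.mem_comap, Submodule.coe_subtype]

theorem stmt3 (a b c d : Submodule R M) (hab : a ≤ b) (hcd : c ≤ d) :
    Function.Injective
        ((qmap (inf_le_left : b ⊓ d ≤ b) (inf_le_left : a ⊓ c ≤ a)).prod
          (qmap (inf_le_right : b ⊓ d ≤ d) (inf_le_right : a ⊓ c ≤ c))) ∧
      Function.Surjective
        ((qmap (le_sup_left : b ≤ b ⊔ d) (le_sup_left : a ≤ a ⊔ c)).coprod
          (-(qmap (le_sup_right : d ≤ b ⊔ d) (le_sup_right : c ≤ a ⊔ c)))) ∧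
      Function.Exact
        ((qmap (inf_le_left : b ⊓ d ≤ b) (inf_le_left : a ⊓ c ≤ a)).prod
          (qmap (inf_le_right : b ⊓ d ≤ d) (inf_le_right : a ⊓ c ≤ c)))
        ((qmap (le_sup_left : b ≤ b ⊔ d) (le_sup_left : a ≤ a ⊔ c)).coprod
          (-(qmap (le_sup_right : d ≤ b ⊔ d) (le_sup_right : c ≤ a ⊔ c)))) := by
  refine ⟨?_, ?_, ?_⟩
  · rw [← LinearMap.ker_eq_bot, Submodule.eq_bot_iff]
    intro x hx
    obtain ⟨x, rfl⟩ := Submodule.Quotient.mk_surjective _ x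
    rw [LinearMap.mem_ker, LinearMap.prod_apply, Function.prod, qmap_mk, qmap_mk,
      Prod.mk_eq_zero, qmk_eq_zero, qmk_eq_zero] at hx
    rw [Submodule.Quotient.mk_eq_zero]
    exact ⟨hx.1, hx.2⟩
  · intro y
    obtain ⟨⟨y, hy⟩, rfl⟩ := Submodule.Quotient.mk_surjective _ y
    obtain ⟨u, hu, v, hv, huv⟩ := Submodule.mem_sup.mp hy
    refine ⟨(Submodule.Quotient.mk ⟨u, hu⟩, Submodule.Quotient.mk ⟨-v, neg_mem hv⟩), ?_⟩
    rw [LinearMap.coprod_apply, LinearMap.neg_apply, qmap_mk, qmap_mk, ← sub_eq_add_neg,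
      ← Submodule.Quotient.mk_sub]
    congr 1
    ext
    show u - -v = y
    rw [← huv]
    abel
  · rw [LinearMap.exact_iff]
    ext y
    obtain ⟨y1, y2⟩ := y
    constructor
    · intro hy
      obtain ⟨yu, rfl⟩ := Submodule.Quotient.mk_surjective _ y1
      obtain ⟨yv, rfl⟩ := Submodule.Quotient.mk_surjective _ y2
      rw [LinearMap.mem_ker, LinearMap.coprod_apply, LinearMap.neg_apply, qmap_mk, qmap_mk,
        ← sub_eq_add_neg, ← Submodule.Quotient.mk_sub, qmk_eq_zero] at hy
      have hy' : (yu : M) - (yv : M) ∈ a ⊔ c := hy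
      obtain ⟨p, hp, q, hq, hpq⟩ := Submodule.mem_sup.mp hy'
      have hq2 : q = ((yu : M) - (yv : M)) - p := eq_sub_of_add_eq' hpq
      have hw : (yu : M) - p ∈ b ⊓ d := by
        constructor
        · exact sub_mem yu.2 (hab hp)
        · have h3 : (yu : M) - p = (yv : M) + q := by rw [hq2]; abel
          rw [h3]
          exact add_mem yv.2 (hcd hq)
      refine ⟨Submodule.Quotient.mk ⟨(yu : M) - p, hw⟩, ?_⟩
      rw [LinearMap.prod_apply, Function.prod, qmap_mk, qmap_mk, Prod.mk.injEq]
      constructor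
      · rw [← sub_eq_zero, ← Submodule.Quotient.mk_sub, qmk_eq_zero]
        show ((yu : M) - p) - (yu : M) ∈ a
        have h4 : ((yu : M) - p) - (yu : M) = -p := by abel
        rw [h4]
        exact neg_mem hp
      · rw [← sub_eq_zero, ← Submodule.Quotient.mk_sub, qmk_eq_zero]
        show ((yu : M) - p) - (yv : M) ∈ c
        have h5 : ((yu : M) - p) - (yv : M) = q := by rw [hq2]; abel
        rw [h5]
        exact hq
    · rintro ⟨w, hw⟩
      rw [← hw]
      obtain ⟨w, rfl⟩ := Submodule.Quotient.mk_surjective _ w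
      rw [LinearMap.mem_ker, LinearMap.prod_apply, Function.prod, qmap_mk, qmap_mk,
        LinearMap.coprod_apply, LinearMap.neg_apply, qmap_mk, qmap_mk, ← sub_eq_add_neg,
        ← Submodule.Quotient.mk_sub, qmk_eq_zero]
      simp
end

section
/- Let L be a lattice, S a finite set, 𝔵 = {x_s}_{s∈S} a family of elements of L and y ∈ L. Suppose (1) 𝔵 is admissible, and (2) for every s ∈ S and every non-empty subset U of S∖{s}, the pair ({x_u ∧ x_s}_{u∈U}, y) is distributive, i.e. (⋁_{u∈U}(x_u ∧ x_s)) ∧ y = ⋁_{u∈U}(x_u ∧ x_s ∧ y). Then the family {x_s ∧ y}_{s∈S} is admissible. -/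
variable {L : Type*} [Lattice L] {S : Type*} [DecidableEq S]

/-- A pair consisting of a family restricted to a nonempty finite set `U` and an
element `y` is distributive: `(⋁_{u∈U} x u) ⊓ y = ⋁_{u∈U} (x u ⊓ y)`. -/
def PairDistrib (x : S → L) (U : Finset S) (hU : U.Nonempty) (y : L) : Prop :=
  U.sup' hU x ⊓ y = U.sup' hU (fun u => x u ⊓ y)

/-- A family is admissible if for every nonempty proper subset `T` and every `t ∉ T`,
the pair `(x|_T, x t)` is distributive. -/
def Admissible [Fintype S] (x : S → L) : Prop :=
  ∀ (T : Finset S) (hT : T.Nonempty), T ≠ Finset.univ →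
    ∀ t ∉ T, PairDistrib x T hT (x t)

/-- A family is universally admissible if for all nonempty disjoint `U V`,
the pair `(x|_U, ⋀_{v∈V} x v)` is distributive. -/
def UnivAdmissible [Fintype S] (x : S → L) : Prop :=
  ∀ (U V : Finset S) (hU : U.Nonempty) (hV : V.Nonempty), Disjoint U V →
    PairDistrib x U hU (V.inf' hV x)

theorem stmt4 [Fintype S] (x : S → L) (y : L)
    (h1 : Admissible x)
    (h2 : ∀ s : S, ∀ U : Finset S, s ∉ U → ∀ (hU : U.Nonempty),
      PairDistrib (fun u => x u ⊓ x s) U hU y) :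
    Admissible (fun s => x s ⊓ y) := by
  intro T hT hTne t ht
  have hx := h1 T hT hTne t ht
  have hy := h2 t T ht hT
  unfold PairDistrib at hx hy ⊢
  apply le_antisymm
  · have hle1 : T.sup' hT (fun s => x s ⊓ y) ≤ T.sup' hT x :=
      Finset.sup'_le _ _ fun s hs => le_trans inf_le_left (Finset.le_sup' x hs)
    have hle2 : T.sup' hT (fun s => x s ⊓ y) ≤ y :=
      Finset.sup'_le _ _ fun s hs => inf_le_right
    calc T.sup' hT (fun s => x s ⊓ y) ⊓ (x t ⊓ y)
        ≤ (T.sup' hT x ⊓ x t) ⊓ y := by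
          apply le_inf (le_inf ?_ ?_) ?_
          · exact le_trans inf_le_left hle1
          · exact le_trans inf_le_right inf_le_left
          · exact le_trans inf_le_left hle2
      _ = T.sup' hT (fun u => x u ⊓ x t) ⊓ y := by rw [hx]
      _ = T.sup' hT (fun u => x u ⊓ x t ⊓ y) := hy
      _ ≤ T.sup' hT (fun s => (x s ⊓ y) ⊓ (x t ⊓ y)) := by
          apply Finset.sup'_le
          intro s hs
          refine le_trans ?_ (Finset.le_sup' (fun s => (x s ⊓ y) ⊓ (x t ⊓ y)) hs)
          apply le_inf (le_inf ?_ ?_) (le_inf ?_ ?_)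
          · exact le_trans inf_le_left inf_le_left
          · exact inf_le_right
          · exact le_trans inf_le_left inf_le_right
          · exact inf_le_right
  · apply Finset.sup'_le
    intro s hs
    exact le_inf (le_trans inf_le_left (Finset.le_sup' (fun s => x s ⊓ y) hs))
      inf_le_right
end

section
/- Let S be a finite set with #S ≥ 3 and 𝔵 = {x_s}_{s∈S} a family in a lattice L. Then 𝔵 is universally admissible if and only if (i) 𝔵 is admissible and (ii) for every s ∈ S, the family {x_t ∧ x_s}_{t∈S∖{s}} is universally admissible. -/
variable {L : Type*} [Lattice L] {S : Type*} [DecidableEq S]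

set_option linter.unusedSectionVars false in
/-- Auxiliary: `inf'` of a family infed with a constant. -/
lemma inf'_inf_const (V : Finset S) (hV : V.Nonempty) (x : S → L) (c : L) :
    V.inf' hV (fun v => x v ⊓ c) = V.inf' hV x ⊓ c := by
  apply le_antisymm
  · obtain ⟨v, hv⟩ := hV
    exact le_inf (Finset.le_inf' _ _ fun u hu => (Finset.inf'_le _ hu).trans inf_le_left)
      ((Finset.inf'_le _ hv).trans inf_le_right)
  · exact Finset.le_inf' _ _ fun u hu =>
      inf_le_inf (Finset.inf'_le _ hu) le_rfl

theorem stmt8 [Fintype S] (hS : 3 ≤ Fintype.card S) (x : S → L) :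
    UnivAdmissible x ↔
      (Admissible x ∧
        ∀ s : S, UnivAdmissible (fun t : {u // u ≠ s} => x t ⊓ x s)) := by
  constructor
  · intro h
    constructor
    · -- admissibility
      intro T hT _ t ht
      have := h T {t} hT (Finset.singleton_nonempty t)
        (by simp [Finset.disjoint_singleton_right, ht])
      simpa [PairDistrib] using this
    · intro s U V hU hV hUV
      let e : {u // u ≠ s} ↪ S := Function.Embedding.subtype _
      have hU' : (U.map e).Nonempty := Finset.map_nonempty.2 hU
      have hV' : (V.map e).Nonempty := Finset.map_nonempty.2 hV
      have hdisj : Disjoint (U.map e) (insert s (V.map e)) := by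
        rw [Finset.disjoint_insert_right]
        constructor
        · simp [e, Function.Embedding.subtype]
          exact fun _ hx _ => hx
        · exact (Finset.disjoint_map e).2 hUV
      have key := h (U.map e) (insert s (V.map e)) hU' (Finset.insert_nonempty _ _) hdisj
      rw [PairDistrib, Finset.inf'_insert (H := hV')] at key
      set m : L := x s ⊓ (V.map e).inf' hV' x with hm
      have hmx : m ≤ x s := inf_le_left
      have hsup : ∀ (f : S → L), (U.map e).sup' hU' f = U.sup' hU (fun u => f u.1) :=
        fun f => Finset.sup'_map f hU'
      have hinf : V.inf' hV (fun t => x t.1 ⊓ x s) = m := by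
        have h1 : (V.map e).inf' hV' (fun v => x v ⊓ x s)
            = V.inf' hV (fun t => x t.1 ⊓ x s) := Finset.inf'_map _ hV'
        rw [← h1, inf'_inf_const, hm, inf_comm]
      rw [hsup x, hsup (fun u => x u ⊓ m)] at key
      rw [PairDistrib, hinf]
      have hR : U.sup' hU (fun u => (x u.1 ⊓ x s) ⊓ m) = U.sup' hU (fun u => x u.1 ⊓ m) :=
        Finset.sup'_congr _ rfl fun u _ => by
          rw [inf_assoc, inf_eq_right.2 hmx]
      rw [hR, ← key]
      apply le_antisymm
      · exact inf_le_inf (Finset.sup'_le _ _ fun u hu =>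
          inf_le_left.trans (Finset.le_sup' (fun u : {u // u ≠ s} => x u.1) hu)) le_rfl
      · rw [key]
        exact Finset.sup'_le _ _ fun u hu =>
          le_inf ((inf_le_inf le_rfl hmx).trans
            (Finset.le_sup' (fun u : {u // u ≠ s} => x u.1 ⊓ x s) hu)) inf_le_right
  · rintro ⟨hadm, hsub⟩ U V hU hV hUV
    obtain ⟨s, hs⟩ := hV
    have hsU : s ∉ U := Finset.disjoint_right.1 hUV hs
    have hUne : U ≠ Finset.univ := fun h => hsU (h ▸ Finset.mem_univ s)
    by_cases hV1 : V = {s}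
    · subst hV1
      simpa [PairDistrib, Finset.inf'_singleton] using hadm U hU hUne s hsU
    · have hWne : (V.erase s).Nonempty := by
        rcases (V.erase s).eq_empty_or_nonempty with h | h
        · exact absurd (Finset.eq_singleton_iff_unique_mem.2 ⟨hs, fun v hv => by
            by_contra hne
            exact absurd (Finset.mem_erase.2 ⟨hne, hv⟩) (by simp [h])⟩) hV1
        · exact h
      let e : {u // u ≠ s} ↪ S := Function.Embedding.subtype _
      have hUmap : (U.subtype (· ≠ s)).map e = U := by
        rw [Finset.subtype_map, Finset.filter_true_of_mem]
        intro u hu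
        exact fun h => hsU (h ▸ hu)
      have hWmap : ((V.erase s).subtype (· ≠ s)).map e = V.erase s := by
        rw [Finset.subtype_map, Finset.filter_true_of_mem]
        intro u hu
        exact Finset.ne_of_mem_erase hu
      have hsUne : (U.subtype (· ≠ s)).Nonempty := Finset.map_nonempty.1 (hUmap ▸ hU)
      have hsVne : ((V.erase s).subtype (· ≠ s)).Nonempty :=
        Finset.map_nonempty.1 (hWmap ▸ hWne)
      have hdisj : Disjoint (U.subtype (· ≠ s)) ((V.erase s).subtype (· ≠ s)) := by
        rw [← Finset.disjoint_map e, hUmap, hWmap]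
        exact hUV.mono_right (Finset.erase_subset _ _)
      have key := hsub s (U.subtype (· ≠ s)) ((V.erase s).subtype (· ≠ s))
        hsUne hsVne hdisj
      rw [PairDistrib] at key
      set m : L := V.inf' ⟨s, hs⟩ x with hm
      have hmx : m ≤ x s := Finset.inf'_le _ hs
      have hmW : m = (V.erase s).inf' hWne x ⊓ x s :=
        le_antisymm
          (le_inf (Finset.le_inf' _ _ fun v hv =>
            Finset.inf'_le _ (Finset.mem_of_mem_erase hv)) hmx)
          (Finset.le_inf' _ _ fun v hv => by
            rcases eq_or_ne v s with rfl | hne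
            · exact inf_le_right
            · exact inf_le_left.trans (Finset.inf'_le _ (Finset.mem_erase.2 ⟨hne, hv⟩)))
      have hsupU : ∀ (f : S → L),
          (U.subtype (· ≠ s)).sup' hsUne (fun u => f u.1) = U.sup' hU f := by
        intro f
        calc (U.subtype (· ≠ s)).sup' hsUne (fun u => f u.1)
            = ((U.subtype (· ≠ s)).map e).sup' (Finset.map_nonempty.2 hsUne) f :=
              (Finset.sup'_map (s := U.subtype (· ≠ s)) (f := e) f
                (Finset.map_nonempty.2 hsUne)).symm
          _ = U.sup' hU f := Finset.sup'_congr _ hUmap fun _ _ => rfl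
      have hinfV : ((V.erase s).subtype (· ≠ s)).inf' hsVne (fun v => x v.1 ⊓ x s) = m := by
        have h1 : ((V.erase s).subtype (· ≠ s)).inf' hsVne (fun v => x v.1 ⊓ x s)
            = (V.erase s).inf' hWne (fun v => x v ⊓ x s) :=
          calc ((V.erase s).subtype (· ≠ s)).inf' hsVne (fun v => x v.1 ⊓ x s)
              = (((V.erase s).subtype (· ≠ s)).map e).inf' (Finset.map_nonempty.2 hsVne)
                (fun v => x v ⊓ x s) :=
                  (Finset.inf'_map (s := (V.erase s).subtype (· ≠ s)) (f := e)
                    (fun v => x v ⊓ x s) (Finset.map_nonempty.2 hsVne)).symm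
            _ = (V.erase s).inf' hWne (fun v => x v ⊓ x s) :=
                Finset.inf'_congr _ hWmap fun _ _ => rfl
        rw [h1, inf'_inf_const, ← hmW]
      rw [hsupU (fun u => x u ⊓ x s), hinfV, hsupU (fun u => (x u ⊓ x s) ⊓ m)] at key
      have hadmU := hadm U hU hUne s hsU
      rw [PairDistrib] at hadmU
      rw [PairDistrib]
      show U.sup' hU x ⊓ m = U.sup' hU fun u => x u ⊓ m
      calc U.sup' hU x ⊓ m = (U.sup' hU x ⊓ x s) ⊓ m := by
            rw [inf_assoc, inf_eq_right.2 hmx]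
        _ = U.sup' hU (fun u => x u ⊓ x s) ⊓ m := by rw [hadmU]
        _ = U.sup' hU (fun u => (x u ⊓ x s) ⊓ m) := key
        _ = U.sup' hU (fun u => x u ⊓ m) :=
            Finset.sup'_congr _ rfl fun u _ => by
              rw [inf_assoc, inf_eq_right.2 hmx]
end

section
/- If #S = 3, a family 𝔵 = {x_s}_{s∈S} of elements in a lattice L is universally admissible if and only if 𝔵 is admissible. -/
variable {L : Type*} [Lattice L] {S : Type*} [DecidableEq S]

theorem stmt9 [Fintype S] (hS : Fintype.card S = 3) (x : S → L) :
    UnivAdmissible x ↔ Admissible x := by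
  constructor
  · intro h T hT hTne t ht
    have := h T {t} hT ⟨t, Finset.mem_singleton_self t⟩
      (by simp [Finset.disjoint_singleton_right, ht])
    simpa using this
  · intro h U V hU hV hdisj
    rcases eq_or_ne V.card 1 with hV1 | hV1
    · obtain ⟨t, rfl⟩ := Finset.card_eq_one.mp hV1
      have htU : t ∉ U := Finset.disjoint_right.mp hdisj (Finset.mem_singleton_self t)
      have hUne : U ≠ Finset.univ := fun h' => htU (h' ▸ Finset.mem_univ t)
      simpa using h U hU hUne t htU
    · have hcard : U.card + V.card ≤ 3 := by
        rw [← Finset.card_union_of_disjoint hdisj, ← hS, ← Finset.card_univ]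
        exact Finset.card_le_univ _
      have hU1 : U.card = 1 := by
        have h1 := hU.card_pos
        have h2 := hV.card_pos
        omega
      obtain ⟨u, rfl⟩ := Finset.card_eq_one.mp hU1
      simp [PairDistrib]
end

section
/- Let L be a lattice, S a finite set, and 𝔞 = {a_s}_{s∈S}, 𝔟 = {b_s}_{s∈S} families in L with a_s ≥ b_s for all s ∈ S. Assume (1) 𝔟 is admissible, and (2) whenever #S ≥ 2: for every proper subset W of S, every subset U of S with #U ≥ 2, every u ∈ U, and every s ∈ S∖W, the pair ({b_k ∧ b_u ∧ ⋀_{w∈W} a_w}_{k∈U∖{u}}, a_s) is distributive. Then the family {b_s ∧ ⋀_{t∈S} a_t}_{s∈S} is admissible. -/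
variable {L : Type*} [Lattice L] {S : Type*} [DecidableEq S]

theorem stmt10 [Fintype S] [OrderTop L] (a b : S → L)
    (hab : ∀ s, b s ≤ a s)
    (h1 : Admissible b)
    (h2 : 2 ≤ Fintype.card S → ∀ W : Finset S, W ≠ Finset.univ →
      ∀ U : Finset S, 2 ≤ U.card → ∀ u ∈ U, ∀ s ∉ W,
      ∀ (hUe : (U.erase u).Nonempty),
      PairDistrib (fun k => b k ⊓ b u ⊓ W.inf a) (U.erase u) hUe (a s)) :
    Admissible (fun s => b s ⊓ Finset.univ.inf a) := by
  intro T hT hTne t ht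
  set A := Finset.univ.inf a with hA
  have hcard : 2 ≤ Fintype.card S := by
    obtain ⟨s, hs⟩ := hT
    exact Fintype.one_lt_card_iff.mpr ⟨s, t, fun h => ht (h ▸ hs)⟩
  have key : ∀ W : Finset S, T.sup' hT (fun k => b k ⊓ b t ⊓ W.inf a)
      = T.sup' hT (fun k => b k ⊓ b t) ⊓ W.inf a := by
    intro W
    induction W using Finset.induction_on with
    | empty => simp
    | @insert s W hs ih =>
      have hWne : W ≠ Finset.univ := fun h => hs (h ▸ Finset.mem_univ s)
      have hU2 : 2 ≤ (insert t T).card := by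
        rw [Finset.card_insert_of_notMem ht]
        have := Finset.card_pos.mpr hT
        omega
      have herase : (insert t T).erase t = T := Finset.erase_insert ht
      have hUe : ((insert t T).erase t).Nonempty := by rw [herase]; exact hT
      have h2' := h2 hcard W hWne (insert t T) hU2 t (Finset.mem_insert_self t T) s hs hUe
      unfold PairDistrib at h2'
      simp only [herase] at h2'
      rw [Finset.inf_insert]
      have e1 : T.sup' hT (fun k => b k ⊓ b t ⊓ (a s ⊓ W.inf a))
          = T.sup' hT (fun k => b k ⊓ b t ⊓ W.inf a ⊓ a s) := by
        apply Finset.sup'_congr hT rfl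
        intro k _
        simp only [inf_assoc]
        rw [inf_comm (a s)]
      rw [e1, ← h2', ih, inf_assoc, inf_comm (W.inf a), ← inf_assoc]
  apply le_antisymm
  · calc T.sup' hT (fun s => b s ⊓ A) ⊓ (b t ⊓ A)
        ≤ T.sup' hT b ⊓ (b t ⊓ A) := by
          exact inf_le_inf_right _ (Finset.sup'_mono_fun fun k _ => inf_le_left)
      _ = (T.sup' hT b ⊓ b t) ⊓ A := by rw [inf_assoc]
      _ = T.sup' hT (fun k => b k ⊓ b t) ⊓ A := by
          rw [h1 T hT hTne t ht]
      _ = T.sup' hT (fun k => b k ⊓ b t ⊓ A) := (key Finset.univ).symm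
      _ = T.sup' hT (fun k => (b k ⊓ A) ⊓ (b t ⊓ A)) := by
          apply Finset.sup'_congr hT rfl
          intro k _
          rw [inf_inf_inf_comm, inf_idem]
  · exact Finset.sup'_le _ _ fun k hk =>
      inf_le_inf_right _ (Finset.le_sup' (fun s => b s ⊓ A) hk)
end

section
/- Let x and y be objects of a category with a morphism f : x → y, and suppose there exist a scalar a (an element of a commutative ring A over which the category is enriched) and a morphism f* : y → x with f*∘f = a·id_x and f∘f* = a·id_y. Given a pullback square with f' : x' → y' the pullback of f along φ : y' → y (with φ' : x' → x), there exists a unique morphism f'* : y' → x' such that f'*∘f' = a·id_{x'}, f'∘f'* = a·id_{y'}, and φ'∘f'* = f*∘φ. -/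
open CategoryTheory

theorem stmt11 {C : Type*} [Category C] [Preadditive C]
    {A : Type*} [CommRing A] [Linear A C]
    {x y x' y' : C} (f : x ⟶ y) (φ : y' ⟶ y) (f' : x' ⟶ y') (φ' : x' ⟶ x)
    (hpb : IsPullback φ' f' f φ)
    (a : A) (fstar : y ⟶ x)
    (h1 : f ≫ fstar = a • 𝟙 x) (h2 : fstar ≫ f = a • 𝟙 y) :
    ∃! fstar' : y' ⟶ x',
      f' ≫ fstar' = a • 𝟙 x' ∧ fstar' ≫ f' = a • 𝟙 y' ∧
        fstar' ≫ φ' = φ ≫ fstar := by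
  have hw : (φ ≫ fstar) ≫ f = (a • 𝟙 y') ≫ φ := by
    simp [Category.assoc, h2]
  refine ⟨hpb.lift (φ ≫ fstar) (a • 𝟙 y') hw, ⟨?_, hpb.lift_snd .., hpb.lift_fst ..⟩, ?_⟩
  · apply hpb.hom_ext
    · rw [Category.assoc, hpb.lift_fst, ← Category.assoc, ← hpb.w, Category.assoc, h1]
      simp
    · rw [Category.assoc, hpb.lift_snd]
      simp
  · rintro g ⟨-, hg2, hg3⟩
    apply hpb.hom_ext
    · rw [hpb.lift_fst, hg3]
    · rw [hpb.lift_snd, hg2]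
end

section
/- Let A be a commutative ring, M an A-module, and f₁,…,f_q, g₁,…,g_q elements of A. Set h_i = f_i·g_i. If h₁,…,h_q are elements such that {h_i} forms an M-sequence (i.e. a regular sequence on M in every order), and each f_i is a non-unit in A, then {f_i} is also an M-sequence. -/
/-- `l` is a regular sequence on `M` (in the given order): every entry is a non-unit and
multiplication by the `i`-th entry is injective on `M/(l₀,…,l_{i-1})M`. -/
def IsRegularSequence (A : Type*) [CommRing A] (M : Type*) [AddCommGroup M] [Module A M]
    (l : List A) : Prop :=
  (∀ a ∈ l, ¬ IsUnit a) ∧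
  ∀ i : Fin l.length,
    Function.Injective
      (fun m : M ⧸ (Ideal.span {x | x ∈ l.take i} • (⊤ : Submodule A M)) => l.get i • m)

/-- `l` is an `M`-sequence: it is a regular sequence on `M` in every ordering. -/
def IsMSequence (A : Type*) [CommRing A] (M : Type*) [AddCommGroup M] [Module A M]
    (l : List A) : Prop :=
  ∀ l' : List A, l'.Perm l → IsRegularSequence A M l'

section Aux

variable {A : Type*} [CommRing A] (M : Type*) [AddCommGroup M] [Module A M]

/-- The submodule `(l) • M` generated by the entries of the list `l`. -/
def Nl (l : List A) : Submodule A M := Ideal.span {x | x ∈ l} • (⊤ : Submodule A M)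

/-- Element-level reformulation of `IsRegularSequence`. -/
def Reg' (l : List A) : Prop :=
  (∀ a ∈ l, ¬ IsUnit a) ∧
  ∀ u a v, l = u ++ a :: v → ∀ m : M, a • m ∈ Nl M u → m ∈ Nl M u

lemma mem_singleton_smul_top (c : A) (m : M) :
    m ∈ Ideal.span {c} • (⊤ : Submodule A M) ↔ ∃ n, m = c • n := by
  constructor
  · intro hm
    refine Submodule.smul_induction_on hm ?_ ?_
    · rintro r hr n -
      obtain ⟨d, rfl⟩ := Ideal.mem_span_singleton'.mp hr
      exact ⟨d • n, by rw [mul_smul, smul_comm]⟩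
    · rintro a b ⟨n₁, rfl⟩ ⟨n₂, rfl⟩
      exact ⟨n₁ + n₂, by rw [smul_add]⟩
  · rintro ⟨n, rfl⟩
    exact Submodule.smul_mem_smul (Ideal.mem_span_singleton_self c) trivial

lemma Nl_middle (u w : List A) (c : A) :
    Nl M (u ++ c :: w) = Ideal.span {c} • (⊤ : Submodule A M) ⊔ Nl M (u ++ w) := by
  have hs : {z : A | z ∈ u ++ c :: w} = insert c {z | z ∈ u ++ w} := by
    ext z
    simp only [Set.mem_setOf_eq, List.mem_append, List.mem_cons, Set.mem_insert_iff]
    tauto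
  unfold Nl
  rw [hs, Ideal.span_insert, Submodule.sup_smul]

lemma mem_Nl_middle (u w : List A) (c : A) (m : M) :
    m ∈ Nl M (u ++ c :: w) ↔ ∃ n, ∃ s ∈ Nl M (u ++ w), m = c • n + s := by
  rw [Nl_middle, Submodule.mem_sup]
  constructor
  · rintro ⟨y, hy, z, hz, rfl⟩
    obtain ⟨n, rfl⟩ := (mem_singleton_smul_top M c y).mp hy
    exact ⟨n, z, hz, rfl⟩
  · rintro ⟨n, s, hs, rfl⟩
    exact ⟨c • n, (mem_singleton_smul_top M c _).mpr ⟨n, rfl⟩, s, hs, rfl⟩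

lemma inj_iff (r : A) (N : Submodule A M) :
    Function.Injective (fun m : M ⧸ N => r • m) ↔ ∀ m : M, r • m ∈ N → m ∈ N := by
  constructor
  · intro h m hm
    have h1 : r • (Submodule.Quotient.mk m : M ⧸ N) = r • ((0 : M ⧸ N)) := by
      rw [smul_zero, ← Submodule.Quotient.mk_smul, Submodule.Quotient.mk_eq_zero]
      exact hm
    have := h h1
    rwa [Submodule.Quotient.mk_eq_zero] at this
  · intro h a b hab
    obtain ⟨a, rfl⟩ := Submodule.Quotient.mk_surjective N a
    obtain ⟨b, rfl⟩ := Submodule.Quotient.mk_surjective N b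
    simp only [← Submodule.Quotient.mk_smul] at hab
    rw [Submodule.Quotient.eq] at hab ⊢
    rw [← smul_sub] at hab
    exact h _ hab

lemma reg_iff (l : List A) : IsRegularSequence A M l ↔ Reg' M l := by
  unfold IsRegularSequence Reg' Nl
  refine and_congr Iff.rfl ?_
  constructor
  · intro H u a v hEq m hm
    subst hEq
    have hlen : u.length < (u ++ a :: v).length := by simp
    have h1 := (inj_iff M _ _).mp (H ⟨u.length, hlen⟩)
    have htake : (u ++ a :: v).take u.length = u := List.take_left
    have hget : (u ++ a :: v).get ⟨u.length, hlen⟩ = a := by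
      simp [List.get_eq_getElem, List.getElem_append_right]
    rw [htake, hget] at h1
    exact h1 m hm
  · intro H i
    rw [inj_iff]
    have hEq : l = l.take i ++ l.get i :: l.drop (i + 1) := by
      conv_lhs => rw [← List.take_append_drop i l]
      rw [List.drop_eq_getElem_cons i.isLt]
      rfl
    exact H (l.take i) (l.get i) (l.drop (i + 1)) hEq

/-- The key replacement lemma: in an `M`-sequence one may replace an entry `x * y`
by the non-unit `x`. -/
lemma key {x y : A} {l : List A}
    (hM : ∀ l', l'.Perm (x * y :: l) → Reg' M l') (hx : ¬ IsUnit x) :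
    ∀ p, p.Perm (x :: l) → Reg' M p := by
  intro p hp
  constructor
  · intro a ha
    rcases List.mem_cons.mp (hp.mem_iff.mp ha) with rfl | hal
    · exact hx
    · exact (hM _ (List.Perm.refl _)).1 a (List.mem_cons_of_mem _ hal)
  · intro u a v hEq m hm
    subst hEq
    by_cases hxu : x ∈ u
    · -- the hard case: the prefix contains `x`
      obtain ⟨s, t, rfl⟩ := List.append_of_mem hxu
      -- p = (s ++ x :: t) ++ a :: v  ~  x :: l
      have hrest : (s ++ (t ++ a :: v)).Perm l := by
        have h1 : ((s ++ x :: t) ++ a :: v).Perm (x :: (s ++ (t ++ a :: v))) := by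
          have := @List.perm_middle A x s (t ++ a :: v)
          simpa using this
        exact (h1.symm.trans hp).cons_inv
      have hq1 : ((s ++ (x*y) :: t) ++ a :: v).Perm (x * y :: l) := by
        have h1 : ((s ++ (x*y) :: t) ++ a :: v).Perm ((x*y) :: (s ++ (t ++ a :: v))) := by
          have := @List.perm_middle A (x*y) s (t ++ a :: v)
          simpa using this
        exact h1.trans (hrest.cons (x*y))
      have R1 := (hM _ hq1).2 (s ++ (x*y) :: t) a v rfl
      have hq2 : ((s ++ t) ++ (x*y) :: (a :: v)).Perm (x * y :: l) := by
        have h1 : ((s ++ t) ++ (x*y) :: (a :: v)).Perm ((x*y) :: (s ++ (t ++ a :: v))) := by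
          have := @List.perm_middle A (x*y) (s ++ t) (a :: v)
          simpa using this
        exact h1.trans (hrest.cons (x*y))
      have R2 := (hM _ hq2).2 (s ++ t) (x*y) (a :: v) rfl
      -- element computation; S := Nl (s ++ t), T := Nl (s ++ x :: t), T' := Nl (s ++ x*y :: t)
      rw [mem_Nl_middle] at hm ⊢
      obtain ⟨m₀, s₀, hs₀, hmeq⟩ := hm
      -- Step 1 : a • (y • m) ∈ T'
      have hy1 : a • (y • m) ∈ Nl M (s ++ (x*y) :: t) := by
        rw [mem_Nl_middle]
        exact ⟨m₀, y • s₀, Submodule.smul_mem _ y hs₀,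
          by linear_combination (norm := module) y • hmeq⟩
      have hy2 := R1 _ hy1
      rw [mem_Nl_middle] at hy2
      obtain ⟨m₁, s₁, hs₁, hym⟩ := hy2
      -- n := m₀ - a • m₁ satisfies (x*y) • n ∈ S, hence n ∈ S
      have hxyn : (x*y) • (m₀ - a • m₁) ∈ Nl M (s ++ t) := by
        have h1 : (x*y) • (m₀ - a • m₁) = a • s₁ - y • s₀ := by
          linear_combination (norm := module) a • hym - y • hmeq
        rw [h1]
        exact Submodule.sub_mem _ (Submodule.smul_mem _ a hs₁) (Submodule.smul_mem _ y hs₀)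
      have hnS : (m₀ - a • m₁) ∈ Nl M (s ++ t) := R2 _ hxyn
      -- a • (m - x • m₁) ∈ S ⊆ T' hence m - x • m₁ ∈ T'
      have ham'S : a • (m - x • m₁) ∈ Nl M (s ++ (x*y) :: t) := by
        rw [mem_Nl_middle]
        refine ⟨0, x • (m₀ - a • m₁) + s₀,
          Submodule.add_mem _ (Submodule.smul_mem _ x hnS) hs₀, ?_⟩
        linear_combination (norm := module) hmeq
      have hm'T' := R1 _ ham'S
      rw [mem_Nl_middle] at hm'T'
      obtain ⟨m₂, s₂, hs₂, hm'eq⟩ := hm'T'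
      exact ⟨m₁ + y • m₂, s₂, hs₂, by linear_combination (norm := module) hm'eq⟩
    · -- prefix does not contain x: then x = a or x ∈ v
      have hxmem : x ∈ u ++ a :: v := hp.mem_iff.mpr (List.mem_cons_self)
      rcases List.mem_append.mp hxmem with h | h
      · exact absurd h hxu
      rcases List.mem_cons.mp h with rfl | hxv
      · -- a = x case: use u ++ (x*y) :: v
        have hrest : (u ++ v).Perm l := by
          have h1 : (u ++ x :: v).Perm (x :: (u ++ v)) := List.perm_middle
          exact (h1.symm.trans hp).cons_inv
        have hq : (u ++ (x*y) :: v).Perm (x * y :: l) :=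
          List.perm_middle.trans (hrest.cons (x*y))
        refine (hM _ hq).2 u (x*y) v rfl m ?_
        have h2 : (x*y) • m = y • (x • m) := by rw [mul_comm, mul_smul]
        rw [h2]
        exact Submodule.smul_mem _ y hm
      · -- x occurs after a
        obtain ⟨s, t, rfl⟩ := List.append_of_mem hxv
        have hrest : (u ++ (a :: (s ++ t))).Perm l := by
          have h1 : (u ++ a :: (s ++ x :: t)).Perm (x :: (u ++ (a :: (s ++ t)))) := by
            have := @List.perm_middle A x (u ++ a :: s) t
            simpa using this
          exact (h1.symm.trans hp).cons_inv
        have hq : (u ++ a :: (s ++ (x*y) :: t)).Perm (x * y :: l) := by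
          have h1 : (u ++ a :: (s ++ (x*y) :: t)).Perm ((x*y) :: (u ++ (a :: (s ++ t)))) := by
            have := @List.perm_middle A (x*y) (u ++ a :: s) t
            simpa using this
          exact h1.trans (hrest.cons (x*y))
        exact (hM _ hq).2 u a (s ++ (x*y) :: t) rfl m hm

end Aux

theorem stmt13 {A : Type*} [CommRing A] (M : Type*) [AddCommGroup M] [Module A M]
    {q : ℕ} (f g h : Fin q → A) (hh : ∀ i, h i = f i * g i)
    (hseq : IsMSequence A M (List.ofFn h)) (hf : ∀ i, ¬ IsUnit (f i)) :
    IsMSequence A M (List.ofFn f) := by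
  have main : ∀ k : ℕ, k ≤ q →
      IsMSequence A M ((List.ofFn f).take k ++ (List.ofFn h).drop k) := by
    intro k
    induction k with
    | zero => intro _; simpa using hseq
    | succ k ih =>
      intro hk
      have hk' : k < q := hk
      have ihk := ih hk'.le
      have hlenf : k < (List.ofFn f).length := by simpa using hk'
      have hlenh : k < (List.ofFn h).length := by simpa using hk'
      have hdrop : (List.ofFn h).drop k = h ⟨k, hk'⟩ :: (List.ofFn h).drop (k+1) := by
        rw [List.drop_eq_getElem_cons hlenh, List.getElem_ofFn]
      have htake : (List.ofFn f).take (k+1) = (List.ofFn f).take k ++ [f ⟨k, hk'⟩] := by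
        rw [← List.take_concat_get hlenf, List.concat_eq_append, List.getElem_ofFn]
      intro l' hl'
      rw [reg_iff]
      have hMk : ∀ l'', l''.Perm ((f ⟨k, hk'⟩ * g ⟨k, hk'⟩) ::
          ((List.ofFn f).take k ++ (List.ofFn h).drop (k+1))) → Reg' M l'' := by
        intro l'' hl''
        rw [← reg_iff]
        refine ihk l'' ?_
        rw [hdrop]
        refine hl''.trans ?_
        rw [← hh]
        exact (@List.perm_middle A (h ⟨k, hk'⟩) ((List.ofFn f).take k)
          ((List.ofFn h).drop (k+1))).symm
      refine key M hMk (hf ⟨k, hk'⟩) l' ?_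
      rw [htake] at hl'
      refine hl'.trans ?_
      have h2 : (List.ofFn f).take k ++ [f ⟨k, hk'⟩] ++ (List.ofFn h).drop (k+1)
          = (List.ofFn f).take k ++ f ⟨k, hk'⟩ :: (List.ofFn h).drop (k+1) := by
        simp
      rw [h2]
      exact List.perm_middle
  have := main q le_rfl
  rwa [List.take_of_length_le (by simp), List.drop_eq_nil_of_le (by simp),
    List.append_nil] at this
end
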